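/- Kernel positivity criterion (matrix form of Theorem 2.3): Assume in addition that the pair (C, A) is observable, i.e. for every v ∈ ℂⁿ, if C Aᵏ v = 0 for all k ∈ ℕ then v = 0. Then Γ is positive definite if and only if the kernel K_{Θ,J}(z, ζ) := (J − Θ(z) J Θ(ζ)ᴴ)/(z + conj(ζ)) is a positive kernel on the set {z ∈ ℂ : Re z > 0 and zI_n − A is invertible}. -/

import Mathlib

open Matrix
open scoped Matrix ComplexOrder

/-- The signature matrix `J = diag(I_p, −I_m)`. -/
def signatureJ (p m : ℕ) : Matrix (Fin p ⊕ Fin m) (Fin p ⊕ Fin m) ℂ :=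
  Matrix.fromBlocks 1 0 0 (-1)

/-- The realization `Θ(λ) = I − C (λI − A)⁻¹ Γ⁻¹ Cᴴ J`. -/
noncomputable def ThetaRealization (n p m : ℕ) (A : Matrix (Fin n) (Fin n) ℂ)
    (C : Matrix (Fin p ⊕ Fin m) (Fin n) ℂ) (Γ : Matrix (Fin n) (Fin n) ℂ) (lam : ℂ) :
    Matrix (Fin p ⊕ Fin m) (Fin p ⊕ Fin m) ℂ :=
  1 - C * (lam • (1 : Matrix (Fin n) (Fin n) ℂ) - A)⁻¹ * Γ⁻¹ * Cᴴ * signatureJ p m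

/-- `K` is a positive matrix-valued kernel on the set `D`. -/
def IsPosKernelOn {α : Type*} {ι : Type*} [Fintype ι] (D : Set α)
    (K : α → α → Matrix ι ι ℂ) : Prop :=
  ∀ (M : ℕ) (ω : Fin M → α), (∀ k, ω k ∈ D) → ∀ c : Fin M → ι → ℂ,
    0 ≤ ∑ k, ∑ l, star (c k) ⬝ᵥ (K (ω k) (ω l)) *ᵥ c l

/-!
By the Lyapunov identity, `J - Θ(z) J Θ(ζ)ᴴ = (z + conj ζ) F(z) Γ⁻¹ F(ζ)ᴴ` with
`F(z) = C (zI - A)⁻¹`, so on the right half-plane the kernel is the Gram kernel of `Γ⁻¹` along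
the vectors `F(z)ᴴ c`. It is therefore positive when `Γ⁻¹ ⪰ 0`. Conversely, a vector orthogonal
to all `F(z)ᴴ c` is annihilated by `C (zI - A)⁻¹` for infinitely many `z`, hence by every `C Aᵏ`,
so by observability these vectors span `ℂⁿ`; kernel positivity then gives `Γ⁻¹ ⪰ 0`, and
`Γ⁻¹ ≻ 0` because it is invertible.
-/

open scoped Polynomial

theorem mulVec_map_eval_eq_zero_of_infinite {R ι κ : Type*} [CommRing R] [IsDomain R]
    [Fintype κ] (N : Matrix ι κ R[X]) (v : κ → R)
    (h : {t | N.map (Polynomial.eval t) *ᵥ v = 0}.Infinite) (t : R) :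
    N.map (Polynomial.eval t) *ᵥ v = 0 := by
  have heval : ∀ s i, (N.map (Polynomial.eval s) *ᵥ v) i =
      ((N *ᵥ (Polynomial.C ∘ v)) i).eval s := by
    intro s i
    rw [← Polynomial.coe_evalRingHom, RingHom.map_mulVec]
    congr
    ext j
    simp
  funext i
  have hzero : (N *ᵥ (Polynomial.C ∘ v)) i = 0 :=
    Polynomial.eq_zero_of_infinite_isRoot _ <| h.mono fun s hs => by
      simp [Polynomial.IsRoot, ← heval, Set.mem_ofPred_eq.mp hs]
  rw [heval, hzero, Polynomial.eval_zero, Pi.zero_apply]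

theorem adjugate_eq_det_smul_nonsing_inv {R n : Type*} [CommRing R] [Fintype n] [DecidableEq n]
    {M : Matrix n n R} (h : IsUnit M.det) : M.adjugate = M.det • M⁻¹ := by
  rw [inv_def, smul_smul, Ring.mul_inverse_cancel _ h, one_smul]

theorem map_eval_one_sub_X_smul {K n : Type*} [Field K] [DecidableEq n] (A : Matrix n n K) (t : K) :
    (1 - (Polynomial.X : K[X]) • A.map Polynomial.C).map (Polynomial.eval t) = 1 - t • A := by
  ext i j
  simp only [map_apply, Matrix.sub_apply, one_apply, Matrix.smul_apply]
  split_ifs <;> simp only [Polynomial.eval_sub, Polynomial.eval_one, Polynomial.eval_zero,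
    Polynomial.eval_mul, Polynomial.eval_X, Polynomial.eval_C, smul_eq_mul]

section ReversedResolvent

variable {K ι n : Type*} [Field K] [Fintype n] [DecidableEq n]
  (A : Matrix n n K) (C : Matrix ι n K)

theorem mul_adjugate_one_sub_smul_mulVec_eq_zero_of_infinite {v : n → K}
    (h : {t : K | (C * (1 - t • A).adjugate) *ᵥ v = 0}.Infinite) (t : K) :
    (C * (1 - t • A).adjugate) *ᵥ v = 0 := by
  have hmap : ∀ s : K, (C.map Polynomial.C *
      (1 - (Polynomial.X : K[X]) • A.map Polynomial.C).adjugate).map (Polynomial.eval s) =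
      C * (1 - s • A).adjugate := by
    intro s
    have hadj := RingHom.map_adjugate (Polynomial.evalRingHom s)
      (1 - (Polynomial.X : K[X]) • A.map Polynomial.C)
    simp only [RingHom.mapMatrix_apply, Polynomial.coe_evalRingHom,
      map_eval_one_sub_X_smul] at hadj
    rw [← Polynomial.coe_evalRingHom, Matrix.map_mul, Polynomial.coe_evalRingHom, hadj,
      Matrix.map_map]
    congr
    ext
    simp
  simpa only [hmap] using mulVec_map_eval_eq_zero_of_infinite (C.map Polynomial.C *
    (1 - (Polynomial.X : K[X]) • A.map Polynomial.C).adjugate) v (by simpa only [hmap] using h) t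

variable [Infinite K]

theorem mul_adjugate_one_sub_smul_mulVec_mulVec_eq_zero {v : n → K}
    (hv : ∀ t : K, (C * (1 - t • A).adjugate) *ᵥ v = 0) (t : K) :
    (C * (1 - t • A).adjugate) *ᵥ (A *ᵥ v) = 0 := by
  refine mul_adjugate_one_sub_smul_mulVec_eq_zero_of_infinite A C
    ((Set.finite_singleton (0 : K)).infinite_compl.mono fun s hs => ?_) t
  have hCv : C *ᵥ v = 0 := by simpa using hv 0
  have hadj : (1 - s • A).adjugate * (s • A) =
      (1 - s • A).adjugate - (1 - s • A).det • 1 := by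
    rw [← adjugate_mul, Matrix.mul_sub, Matrix.mul_one, sub_sub_cancel]
  have hscaled : s • ((C * (1 - s • A).adjugate) *ᵥ (A *ᵥ v)) = 0 := by
    calc s • ((C * (1 - s • A).adjugate) *ᵥ (A *ᵥ v))
        = (C * ((1 - s • A).adjugate * (s • A))) *ᵥ v := by
          rw [mulVec_mulVec, Matrix.mul_smul, Matrix.mul_smul, smul_mulVec, Matrix.mul_assoc]
      _ = (C * (1 - s • A).adjugate) *ᵥ v - (1 - s • A).det • (C *ᵥ v) := by
          rw [hadj, Matrix.mul_sub, sub_mulVec, Matrix.mul_smul, Matrix.mul_one, smul_mulVec]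
      _ = 0 := by rw [hv s, hCv, smul_zero, sub_zero]
  exact (smul_eq_zero.mp hscaled).resolve_left hs

theorem mul_pow_mulVec_eq_zero_of_forall_mul_adjugate {v : n → K}
    (hv : ∀ t : K, (C * (1 - t • A).adjugate) *ᵥ v = 0) (k : ℕ) : (C * A ^ k) *ᵥ v = 0 := by
  have hpow : ∀ t : K, (C * (1 - t • A).adjugate) *ᵥ (A ^ k *ᵥ v) = 0 := by
    induction k with
    | zero => simpa using hv
    | succ k ih =>
      rw [pow_succ', ← mulVec_mulVec]
      exact mul_adjugate_one_sub_smul_mulVec_mulVec_eq_zero A C ih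
  simpa [mulVec_mulVec] using hpow 0

/-- Substituting `z = t⁻¹` turns `adj (zI - A)` into the polynomial `adj (I - tA)` in `t`, whose
value `I` at `t = 0` plays the role of the expansion of the resolvent at infinity. -/
theorem mul_pow_mulVec_eq_zero_of_mul_resolvent {v : n → K} {S : Set K} (hS : S.Infinite)
    (hres : ∀ z ∈ S, IsUnit (z • 1 - A).det ∧ (C * (z • 1 - A)⁻¹) *ᵥ v = 0) (k : ℕ) :
    (C * A ^ k) *ᵥ v = 0 := by
  refine mul_pow_mulVec_eq_zero_of_forall_mul_adjugate A C
    (mul_adjugate_one_sub_smul_mulVec_eq_zero_of_infinite A C ?_) k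
  refine ((hS.sdiff (Set.finite_singleton 0)).image inv_injective.injOn).mono ?_
  rintro _ ⟨z, ⟨hzS, hz0⟩, rfl⟩
  obtain ⟨hdet, hzv⟩ := hres z hzS
  have hscale : 1 - z⁻¹ • A = z⁻¹ • (z • 1 - A) := by
    rw [smul_sub, smul_smul, inv_mul_cancel₀ hz0, one_smul]
  show (C * (1 - z⁻¹ • A).adjugate) *ᵥ v = 0
  rw [hscale, adjugate_smul, adjugate_eq_det_smul_nonsing_inv hdet, Matrix.mul_smul,
    Matrix.mul_smul, smul_mulVec, smul_mulVec, hzv, smul_zero, smul_zero]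

end ReversedResolvent

theorem finite_setOf_not_isUnit_det_smul_one_sub {K n : Type*} [Field K] [Fintype n]
    [DecidableEq n] (A : Matrix n n K) : {z : K | ¬IsUnit (z • 1 - A).det}.Finite := by
  refine (Polynomial.finite_setOfPred_isRoot A.charpoly_monic.ne_zero).subset fun z hz => ?_
  rw [Set.mem_ofPred_eq, Polynomial.IsRoot.def, eval_charpoly, scalar_apply,
    ← smul_one_eq_diagonal]
  simpa [isUnit_iff_ne_zero] using hz

theorem infinite_setOf_re_pos_isUnit_det {n : Type*} [Fintype n] [DecidableEq n]
    (A : Matrix n n ℂ) : {z : ℂ | 0 < z.re ∧ IsUnit (z • 1 - A).det}.Infinite := by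
  have hhalf : {z : ℂ | 0 < z.re}.Infinite :=
    infinite_of_mem_nhds (1 : ℂ) <|
      (isOpen_lt continuous_const Complex.continuous_re).mem_nhds (by simp)
  refine (hhalf.sdiff (finite_setOf_not_isUnit_det_smul_one_sub A)).mono fun z hz => ?_
  exact ⟨hz.1, not_not.mp hz.2⟩

theorem span_conjTranspose_mulVec_eq_top {𝕜 α ι n : Type*} [RCLike 𝕜] [Fintype ι] [Fintype n]
    (F : α → Matrix ι n 𝕜) (hF : ∀ w, (∀ a, F a *ᵥ w = 0) → w = 0) :
    Submodule.span 𝕜 {u | ∃ a c, u = (F a)ᴴ *ᵥ c} = ⊤ := by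
  classical
  by_contra hne
  obtain ⟨f, hf0, hle⟩ := (Submodule.span 𝕜 _).exists_le_ker_of_lt_top (lt_top_iff_ne_top.2 hne)
  set w : n → 𝕜 := fun j => star (f fun j' => if j = j' then 1 else 0)
  have hf : ∀ u, f u = star w ⬝ᵥ u := by
    intro u
    rw [LinearMap.pi_apply_eq_sum_univ f u]
    simp [w, dotProduct, mul_comm]
  have hw : w = 0 := hF w fun a => by
    have h := hle (Submodule.subset_span ⟨a, F a *ᵥ w, rfl⟩)
    rwa [LinearMap.mem_ker, hf, dotProduct_mulVec, ← star_mulVec,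
      dotProduct_star_self_eq_zero] at h
  exact hf0 (LinearMap.ext fun u => by simp [hf, hw])

section GramKernel

variable {α ι n : Type*} [Fintype ι] [Fintype n]

theorem sum_sum_star_dotProduct_mul_mul_conjTranspose {κ : Type*} [Fintype κ]
    (F : κ → Matrix ι n ℂ) (G : Matrix n n ℂ) (c : κ → ι → ℂ) :
    ∑ k, ∑ l, star (c k) ⬝ᵥ (F k * G * (F l)ᴴ) *ᵥ c l =
      star (∑ k, (F k)ᴴ *ᵥ c k) ⬝ᵥ G *ᵥ ∑ l, (F l)ᴴ *ᵥ c l := by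
  rw [star_sum, mulVec_sum, sum_dotProduct]
  refine Finset.sum_congr rfl fun k _ => ?_
  rw [dotProduct_sum]
  refine Finset.sum_congr rfl fun l _ => ?_
  rw [star_mulVec, conjTranspose_conjTranspose, ← dotProduct_mulVec, mulVec_mulVec,
    mulVec_mulVec, Matrix.mul_assoc]

theorem isPosKernelOn_congr {D : Set α} {K K' : α → α → Matrix ι ι ℂ}
    (h : ∀ z ∈ D, ∀ ζ ∈ D, K z ζ = K' z ζ) : IsPosKernelOn D K ↔ IsPosKernelOn D K' := by
  refine forall₂_congr fun M ω => forall_congr' fun hω => ?_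
  simp only [h _ (hω _) _ (hω _)]

theorem isPosKernelOn_mul_mul_conjTranspose (D : Set α) (F : α → Matrix ι n ℂ)
    {G : Matrix n n ℂ} (hG : G.PosSemidef) :
    IsPosKernelOn D fun z ζ => F z * G * (F ζ)ᴴ := fun M ω _ c => by
  rw [sum_sum_star_dotProduct_mul_mul_conjTranspose]
  exact hG.dotProduct_mulVec_nonneg _

theorem posSemidef_of_isPosKernelOn_mul_mul_conjTranspose {D : Set α} {F : α → Matrix ι n ℂ}
    {G : Matrix n n ℂ} (hG : G.IsHermitian) (hF : ∀ w, (∀ z ∈ D, F z *ᵥ w = 0) → w = 0)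
    (hK : IsPosKernelOn D fun z ζ => F z * G * (F ζ)ᴴ) : G.PosSemidef := by
  have hspan := span_conjTranspose_mulVec_eq_top (fun z : D => F z)
    fun w hw => hF w fun z hz => hw ⟨z, hz⟩
  refine PosSemidef.of_dotProduct_mulVec_nonneg hG fun x => ?_
  obtain ⟨M, f, g, rfl⟩ := Submodule.mem_span_set'.1 (hspan ▸ Submodule.mem_top (x := x))
  choose z c hc using fun i => (g i).2
  have hsum : ∑ i, f i • (g i : n → ℂ) = ∑ i, (F (z i))ᴴ *ᵥ (f i • c i) := by
    simp only [hc, mulVec_smul]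
  rw [hsum, ← sum_sum_star_dotProduct_mul_mul_conjTranspose]
  exact hK M (fun i => z i) (fun i => (z i).2) _

end GramKernel

theorem signatureJ_conjTranspose (p m : ℕ) : (signatureJ p m)ᴴ = signatureJ p m := by
  simp [signatureJ, fromBlocks_conjTranspose]

theorem signatureJ_mul_self (p m : ℕ) : signatureJ p m * signatureJ p m = 1 := by
  simp [signatureJ, fromBlocks_multiply, ← fromBlocks_one]

theorem sub_one_sub_mul_mul_one_sub {R ι n : Type*} [Ring R] [Fintype ι] [DecidableEq ι]
    [Fintype n] {J : Matrix ι ι R} (hJ : J * J = 1) (X : Matrix ι n R) (B : Matrix n ι R)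
    (C : Matrix ι n R) (Y : Matrix n ι R) :
    J - (1 - X * B * J) * J * (1 - J * C * Y) = X * B + C * Y - X * (B * J * C) * Y := by
  have hJJ : J * (J * (C * Y)) = C * Y := by
    rw [← Matrix.mul_assoc, hJ, Matrix.one_mul]
  simp only [Matrix.sub_mul, Matrix.mul_sub, Matrix.one_mul, Matrix.mul_one, Matrix.mul_assoc,
    hJ, hJJ]
  abel

section Realization

variable {n p m : ℕ} {A : Matrix (Fin n) (Fin n) ℂ} {C : Matrix (Fin p ⊕ Fin m) (Fin n) ℂ}
  {Γ : Matrix (Fin n) (Fin n) ℂ}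

theorem signatureJ_sub_ThetaRealization_mul_mul_conjTranspose (hΓH : Γ.IsHermitian)
    (hΓinv : IsUnit Γ.det) (hLyap : Γ * A + Aᴴ * Γ = -(Cᴴ * signatureJ p m * C)) {z ζ : ℂ}
    (hz : IsUnit (z • (1 : Matrix (Fin n) (Fin n) ℂ) - A).det)
    (hζ : IsUnit (ζ • (1 : Matrix (Fin n) (Fin n) ℂ) - A).det) :
    signatureJ p m - ThetaRealization n p m A C Γ z * signatureJ p m *
        (ThetaRealization n p m A C Γ ζ)ᴴ =
      (z + star ζ) • (C * (z • 1 - A)⁻¹ * Γ⁻¹ * (C * (ζ • 1 - A)⁻¹)ᴴ) := by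
  set J := signatureJ p m
  set M := z • (1 : Matrix (Fin n) (Fin n) ℂ) - A
  set P := ζ • (1 : Matrix (Fin n) (Fin n) ℂ) - A
  set X := C * M⁻¹ * Γ⁻¹
  set Y := C * P⁻¹ * Γ⁻¹
  have hΘζ : (ThetaRealization n p m A C Γ ζ)ᴴ = 1 - J * C * Yᴴ := by
    simp only [ThetaRealization, conjTranspose_sub, conjTranspose_one, conjTranspose_mul,
      signatureJ_conjTranspose, hΓH.inv.eq, conjTranspose_conjTranspose, Matrix.mul_assoc, Y, P,
      J]
  have hLyap' : Cᴴ * J * C = Γ * M + Pᴴ * Γ - (z + star ζ) • Γ := by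
    rw [← neg_neg (Cᴴ * J * C), ← hLyap]
    simp only [M, P, conjTranspose_sub, conjTranspose_smul, conjTranspose_one, Matrix.mul_sub,
      Matrix.sub_mul, Matrix.mul_smul, Matrix.smul_mul, Matrix.mul_one, Matrix.one_mul, add_smul]
    abel
  have hXΓ : X * Γ = C * M⁻¹ := by
    rw [Matrix.mul_assoc, nonsing_inv_mul Γ hΓinv, Matrix.mul_one]
  have hXΓM : X * Γ * M = C := by
    rw [hXΓ, Matrix.mul_assoc, nonsing_inv_mul M hz, Matrix.mul_one]
  have hYH : Yᴴ = Γ⁻¹ * (C * P⁻¹)ᴴ := by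
    rw [conjTranspose_mul, hΓH.inv.eq]
  have hPΓY : Pᴴ * Γ * Yᴴ = Cᴴ := by
    rw [hYH, Matrix.mul_assoc, ← Matrix.mul_assoc Γ, mul_nonsing_inv Γ hΓinv, Matrix.one_mul,
      ← conjTranspose_mul, Matrix.mul_assoc, nonsing_inv_mul P hζ, Matrix.mul_one]
  calc J - ThetaRealization n p m A C Γ z * J * (ThetaRealization n p m A C Γ ζ)ᴴ
      = X * Cᴴ + C * Yᴴ - X * (Cᴴ * J * C) * Yᴴ := by
        rw [hΘζ, ← sub_one_sub_mul_mul_one_sub (signatureJ_mul_self p m)]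
        simp only [ThetaRealization, X, M, J, Matrix.mul_assoc]
    _ = (z + star ζ) • (X * Γ * Yᴴ) := by
        rw [hLyap', Matrix.mul_sub, Matrix.mul_add, Matrix.sub_mul, Matrix.add_mul,
          ← Matrix.mul_assoc, hXΓM, Matrix.mul_assoc X, hPΓY, Matrix.mul_smul, Matrix.smul_mul]
        abel
    _ = (z + star ζ) • (C * M⁻¹ * Γ⁻¹ * (C * P⁻¹)ᴴ) := by
        rw [hXΓ, hYH, Matrix.mul_assoc (C * M⁻¹)]

end Realization

/-- **Kernel positivity criterion (matrix form of Theorem 2.3).** If `(C, A)` is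
observable, then `Γ ≻ 0` iff the kernel `K_{Θ,J}(z,ζ) = (J − Θ(z) J Θ(ζ)ᴴ)/(z + conj ζ)`
is a positive kernel on `{z : Re z > 0, zI − A invertible}`. -/
theorem kernel_positivity_criterion
    (n p m : ℕ) (A : Matrix (Fin n) (Fin n) ℂ)
    (C : Matrix (Fin p ⊕ Fin m) (Fin n) ℂ) (Γ : Matrix (Fin n) (Fin n) ℂ)
    (hΓH : Γ.IsHermitian) (hΓinv : IsUnit Γ.det)
    (hLyap : Γ * A + Aᴴ * Γ = -(Cᴴ * signatureJ p m * C))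
    (hobs : ∀ v : Fin n → ℂ, (∀ k : ℕ, (C * A ^ k) *ᵥ v = 0) → v = 0) :
    Γ.PosDef ↔
      IsPosKernelOn
        {z : ℂ | 0 < z.re ∧ IsUnit (z • (1 : Matrix (Fin n) (Fin n) ℂ) - A).det}
        (fun z ζ =>
          (z + star ζ)⁻¹ •
            (signatureJ p m -
              ThetaRealization n p m A C Γ z * signatureJ p m *
                (ThetaRealization n p m A C Γ ζ)ᴴ)) := by
  set D := {z : ℂ | 0 < z.re ∧ IsUnit (z • (1 : Matrix (Fin n) (Fin n) ℂ) - A).det}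
  set F : ℂ → Matrix (Fin p ⊕ Fin m) (Fin n) ℂ := fun z => C * (z • 1 - A)⁻¹
  have hkernel : ∀ z ∈ D, ∀ ζ ∈ D, (z + star ζ)⁻¹ • (signatureJ p m -
      ThetaRealization n p m A C Γ z * signatureJ p m * (ThetaRealization n p m A C Γ ζ)ᴴ) =
      F z * Γ⁻¹ * (F ζ)ᴴ := by
    rintro z ⟨hz, hzA⟩ ζ ⟨hζ, hζA⟩
    have hne : z + star ζ ≠ 0 := fun h => by
      have := congrArg Complex.re h
      simp only [Complex.add_re, Complex.star_def, Complex.conj_re, Complex.zero_re] at this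
      linarith
    rw [signatureJ_sub_ThetaRealization_mul_mul_conjTranspose hΓH hΓinv hLyap hzA hζA, smul_smul,
      inv_mul_cancel₀ hne, one_smul]
  have hF : ∀ w, (∀ z ∈ D, F z *ᵥ w = 0) → w = 0 := fun w hw =>
    hobs w <| mul_pow_mulVec_eq_zero_of_mul_resolvent A C (infinite_setOf_re_pos_isUnit_det A)
      fun z hz => ⟨hz.2, hw z hz⟩
  rw [isPosKernelOn_congr hkernel, ← posDef_inv_iff]
  refine ⟨fun hΓ => isPosKernelOn_mul_mul_conjTranspose D F hΓ.posSemidef, fun hK => ?_⟩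
  exact (posSemidef_of_isPosKernelOn_mul_mul_conjTranspose hΓH.inv hF hK).posDef_iff_isUnit.2
    (isUnit_nonsing_inv_iff.2 ((isUnit_iff_isUnit_det Γ).2 hΓinv))
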